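/- Let a ∈ A. Then: (i) sgn(a) ∈ CC(a); (ii) sgn(a)² = a°; (iii) sgn(a)·a = a·sgn(a) = |a|; (iv) sgn(a)·|a| = |a|·sgn(a) = a (polar decomposition of a). -/
import Mathlib


/-- A synaptic algebra: a real vector subspace `carrier` of a unital associative
real algebra `R`, containing `1`, equipped with a positive cone `Pos` making it a
partially ordered archimedean real vector space with order unit `1`, and
satisfying conditions [SA2]–[SA9]. The partial order is `a ≤ b ↔ b - a ∈ Pos`. -/
structure SynapticAlgebra (R : Type*) [Ring R] [Algebra ℝ R] where
  carrier : Set R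
  one_mem : (1 : R) ∈ carrier
  add_mem : ∀ {a b : R}, a ∈ carrier → b ∈ carrier → a + b ∈ carrier
  smul_mem : ∀ (t : ℝ) {a : R}, a ∈ carrier → t • a ∈ carrier
  neg_mem : ∀ {a : R}, a ∈ carrier → -a ∈ carrier
  Pos : Set R
  pos_subset : Pos ⊆ carrier
  pos_add : ∀ {a b : R}, a ∈ Pos → b ∈ Pos → a + b ∈ Pos
  pos_smul : ∀ {t : ℝ}, 0 ≤ t → ∀ {a : R}, a ∈ Pos → t • a ∈ Pos
  pos_antisymm : ∀ {a : R}, a ∈ Pos → -a ∈ Pos → a = 0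
  arch : ∀ {a b : R}, a ∈ carrier → b ∈ carrier →
    (∀ n : ℕ, b - (n : ℝ) • a ∈ Pos) → -a ∈ Pos
  one_pos : (1 : R) ∈ Pos
  orderUnit : ∀ {a : R}, a ∈ carrier → ∃ n : ℕ, (n : ℝ) • (1 : R) - a ∈ Pos
  SA2 : ∀ {a b : R}, a ∈ Pos → b ∈ Pos → a * b = b * a → a * b ∈ Pos
  SA3 : ∀ {a : R}, a ∈ carrier → a * a ∈ Pos
  SA4 : ∀ {a b : R}, a ∈ Pos → b ∈ Pos → a * b * a ∈ Pos
  SA5 : ∀ {a b : R}, a ∈ carrier → b ∈ Pos → a * b * a = 0 → a * b = 0 ∧ b * a = 0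
  SA6 : ∀ {a : R}, a ∈ Pos →
    ∃ b : R, b ∈ Pos ∧ (∀ c ∈ carrier, c * a = a * c → c * b = b * c) ∧ b * b = a
  SA7 : ∀ {a : R}, a ∈ carrier →
    ∃ p : R, p ∈ carrier ∧ p * p = p ∧ ∀ b ∈ carrier, (a * b = 0 ↔ p * b = 0)
  SA8 : ∀ {a : R}, a ∈ carrier → a - 1 ∈ Pos → ∃ b ∈ carrier, a * b = 1 ∧ b * a = 1
  SA9 : ∀ {a b : R}, a ∈ carrier → b ∈ carrier → ∀ s : ℕ → R,
    (∀ n, s n ∈ carrier) → (∀ n, s (n + 1) - s n ∈ Pos) →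
    (∀ m n, s m * s n = s n * s m) → (∀ n, s n * b = b * s n) →
    (∀ ε : ℝ, 0 < ε →
      ∃ N : ℕ, ∀ n ≥ N, (a - s n) - (-ε) • (1 : R) ∈ Pos ∧ ε • (1 : R) - (a - s n) ∈ Pos) →
    a * b = b * a

namespace SynapticAlgebra

variable {R : Type*} [Ring R] [Algebra ℝ R]

/-- The partial order of the synaptic algebra: `a ≤ b` iff `b - a` is in the positive cone. -/
def le (S : SynapticAlgebra R) (a b : R) : Prop := b - a ∈ S.Pos

/-- The identification of a real number `t` with the element `t·1` of the algebra. -/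
def scal (_ : SynapticAlgebra R) (t : ℝ) : R := t • (1 : R)

/-- The order-unit norm: `‖a‖ = inf {t : ℝ | 0 < t ∧ -t·1 ≤ a ≤ t·1}`. -/
noncomputable def nrm (S : SynapticAlgebra R) (a : R) : ℝ :=
  sInf {t : ℝ | 0 < t ∧ S.le (S.scal (-t)) a ∧ S.le a (S.scal t)}

/-- `p` is a projection: an idempotent element of the algebra. -/
def IsProj (S : SynapticAlgebra R) (p : R) : Prop := p ∈ S.carrier ∧ p * p = p

/-- `e` is an effect: an element with `0 ≤ e ≤ 1`. -/
def IsEff (S : SynapticAlgebra R) (e : R) : Prop := e ∈ S.carrier ∧ S.le 0 e ∧ S.le e 1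

/-- `b ∈ CC(a)`: `b` is in the algebra and commutes with every element of the
algebra that commutes with `a` (the double commutant of `a`). -/
def inCC (S : SynapticAlgebra R) (a b : R) : Prop :=
  b ∈ S.carrier ∧ ∀ c ∈ S.carrier, c * a = a * c → c * b = b * c

/-- The square root of a positive element (chosen via [SA6]; it is unique). -/
noncomputable def sqrt (S : SynapticAlgebra R) (a : R) : R :=
  @dite R (a ∈ S.Pos) (Classical.dec _) (fun h => Classical.choose (S.SA6 h)) (fun _ => 0)

/-- The carrier projection `a°` of `a` (chosen via [SA7]; it is unique):
the projection `p` such that for all `b` in the algebra, `ab = 0 ↔ pb = 0`. -/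
noncomputable def carr (S : SynapticAlgebra R) (a : R) : R :=
  @dite R (a ∈ S.carrier) (Classical.dec _) (fun h => Classical.choose (S.SA7 h)) (fun _ => 0)

/-- Absolute value: `|a| := (a²)^{1/2}`. -/
noncomputable def abs (S : SynapticAlgebra R) (a : R) : R := S.sqrt (a * a)

/-- Positive part: `a⁺ := ½(|a| + a)`. -/
noncomputable def posPart (S : SynapticAlgebra R) (a : R) : R := (1/2 : ℝ) • (S.abs a + a)

/-- Negative part: `a⁻ := ½(|a| − a)`. -/
noncomputable def negPart (S : SynapticAlgebra R) (a : R) : R := (1/2 : ℝ) • (S.abs a - a)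

/-- Signum: `sgn(a) := (a⁺)° − (a⁻)°`. -/
noncomputable def sgn (S : SynapticAlgebra R) (a : R) : R :=
  S.carr (S.posPart a) - S.carr (S.negPart a)

/-- The Sasaki mapping: `φ_a(b) := (aba)°`. -/
noncomputable def sas (S : SynapticAlgebra R) (a b : R) : R := S.carr (a * b * a)

/-- `m` is the infimum of the projections `p` and `q` in the poset `P` of projections. -/
def IsMeet (S : SynapticAlgebra R) (p q m : R) : Prop :=
  S.IsProj m ∧ S.le m p ∧ S.le m q ∧ ∀ r, S.IsProj r → S.le r p → S.le r q → S.le r m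

/-- `j` is the supremum of the projections `p` and `q` in the poset `P` of projections. -/
def IsJoin (S : SynapticAlgebra R) (p q j : R) : Prop :=
  S.IsProj j ∧ S.le p j ∧ S.le q j ∧ ∀ r, S.IsProj r → S.le p r → S.le q r → S.le j r

end SynapticAlgebra

namespace SynapticAlgebra

variable {R : Type*} [Ring R] [Algebra ℝ R] (S : SynapticAlgebra R)

lemma sub_mem' {a b : R} (ha : a ∈ S.carrier) (hb : b ∈ S.carrier) : a - b ∈ S.carrier := by
  rw [sub_eq_add_neg]; exact S.add_mem ha (S.neg_mem hb)

lemma smul_one_mem' (t : ℝ) : (t • (1:R)) ∈ S.carrier := S.smul_mem t S.one_mem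

lemma smul_one_pos' {t : ℝ} (ht : 0 ≤ t) : (t • (1:R)) ∈ S.Pos := S.pos_smul ht S.one_pos

lemma eq_zero_of_sq' {x : R} (hx : x ∈ S.carrier) (h : x * x = 0) : x = 0 := by
  have h5 := S.SA5 hx S.one_pos (by rw [mul_one]; exact h)
  simpa using h5.1

lemma pos_of_idem' {x : R} (hx : x ∈ S.carrier) (h : x * x = x) : x ∈ S.Pos := h ▸ S.SA3 hx

lemma exists_shift' {x : R} (hx : x ∈ S.carrier) : ∃ t : ℝ, 0 ≤ t ∧ x + t • (1:R) ∈ S.Pos := by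
  obtain ⟨n, hn⟩ := S.orderUnit (S.neg_mem hx)
  rw [sub_neg_eq_add] at hn
  exact ⟨n, n.cast_nonneg, by rw [add_comm]; exact hn⟩

lemma comm_mul_mem' {x y : R} (hx : x ∈ S.carrier) (hy : y ∈ S.carrier) (h : x * y = y * x) :
    x * y ∈ S.carrier := by
  obtain ⟨t, ht, hxt⟩ := S.exists_shift' hx
  obtain ⟨s, hs, hys⟩ := S.exists_shift' hy
  have hcomm : (x + t • 1) * (y + s • 1) = (y + s • 1) * (x + t • 1) := by
    simp only [mul_add, add_mul, mul_smul_comm, smul_mul_assoc, smul_smul, h, one_mul, mul_one]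
    module
  have hP := S.pos_subset (S.SA2 hxt hys hcomm)
  have hexp : x * y = (x + t•(1:R)) * (y + s•(1:R)) - (s • x + (t • y + (t*s) • (1:R))) := by
    simp only [mul_add, add_mul, mul_smul_comm, smul_mul_assoc, smul_smul, one_mul, mul_one]
    module
  rw [hexp]
  exact S.sub_mem' hP (S.add_mem (S.smul_mem _ hx) (S.add_mem (S.smul_mem _ hy) (S.smul_one_mem' _)))

lemma arch_aux' {x : R} (hx : x ∈ S.carrier) (h : ∀ ε:ℝ, 0 < ε → x + ε•(1:R) ∈ S.Pos) :
    x ∈ S.Pos := by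
  have h0 := S.arch (S.neg_mem hx) S.one_mem (fun n => ?_)
  · simpa using h0
  · rcases Nat.eq_zero_or_pos n with hn | hn
    · subst hn; simpa using S.one_pos
    · have hnr : (0:ℝ) < n := by exact_mod_cast hn
      have := S.pos_smul hnr.le (h ((n:ℝ)⁻¹) (by positivity))
      have heq : (n:ℝ) • (x + (n:ℝ)⁻¹•(1:R)) = (1:R) - (n:ℝ) • (-x) := by
        rw [smul_add, smul_smul, mul_inv_cancel₀ hnr.ne', one_smul, smul_neg]
        abel
      rwa [heq] at this

lemma sqrt_spec' {x : R} (h : x ∈ S.Pos) :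
    S.sqrt x ∈ S.Pos ∧ (∀ c ∈ S.carrier, c * x = x * c → c * S.sqrt x = S.sqrt x * c) ∧
      S.sqrt x * S.sqrt x = x := by
  rw [sqrt, dif_pos h]
  exact Classical.choose_spec (S.SA6 h)

lemma carr_spec' {x : R} (h : x ∈ S.carrier) :
    S.carr x ∈ S.carrier ∧ S.carr x * S.carr x = S.carr x ∧
      ∀ b ∈ S.carrier, (x * b = 0 ↔ S.carr x * b = 0) := by
  rw [carr, dif_pos h]
  exact Classical.choose_spec (S.SA7 h)

lemma ann_left_of_right' {e x : R} (he : e ∈ S.Pos) (hx : x ∈ S.carrier) (h : e * x = 0) :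
    x * e = 0 :=
  (S.SA5 hx he (by rw [mul_assoc, h, mul_zero])).1

lemma ann_right_of_left' {e x : R} (he : e ∈ S.Pos) (hx : x ∈ S.carrier) (h : x * e = 0) :
    e * x = 0 :=
  (S.SA5 hx he (by rw [h, zero_mul])).2

end SynapticAlgebra
namespace SynapticAlgebra

variable {R : Type*} [Ring R] [Algebra ℝ R] (S : SynapticAlgebra R)

lemma inv_lemma' {z : R} {ε : ℝ} (hε : 0 < ε) (h : z - ε • (1:R) ∈ S.Pos) :
    ∃ i, i ∈ S.Pos ∧ z * i = 1 ∧ i * z = 1 ∧ ∀ c : R, c * z = z * c → c * i = i * c := by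
  have hzc : z ∈ S.carrier := by
    have := S.add_mem (S.pos_subset h) (S.smul_one_mem' ε); simpa using this
  set z' := ε⁻¹ • z with hz'
  have hz'c : z' ∈ S.carrier := S.smul_mem _ hzc
  have hz'1 : z' - 1 ∈ S.Pos := by
    have := S.pos_smul (inv_nonneg.mpr hε.le) h
    rwa [smul_sub, smul_smul, inv_mul_cancel₀ hε.ne', one_smul] at this
  obtain ⟨b, hbc, hz'b, hbz'⟩ := S.SA8 hz'c hz'1
  have hz'pos : z' ∈ S.Pos := by have := S.pos_add hz'1 S.one_pos; simpa using this
  have hcombz : b * z' = z' * b := by rw [hz'b, hbz']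
  have hbsq : z' * (b * b) = b := by rw [← mul_assoc, hz'b, one_mul]
  have hbpos : b ∈ S.Pos := by
    have hcm : z' * (b * b) = (b * b) * z' := by
      rw [hbsq, mul_assoc, hbz', mul_one]
    have := S.SA2 hz'pos (S.SA3 hbc) hcm
    rwa [hbsq] at this
  have hz : z = ε • z' := by rw [hz', smul_smul, mul_inv_cancel₀ hε.ne', one_smul]
  refine ⟨ε⁻¹ • b, S.pos_smul (inv_nonneg.mpr hε.le) hbpos, ?_, ?_, ?_⟩
  · rw [hz, smul_mul_assoc, mul_smul_comm, hz'b, smul_smul, mul_inv_cancel₀ hε.ne', one_smul]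
  · rw [hz, smul_mul_assoc, mul_smul_comm, hbz', smul_smul, inv_mul_cancel₀ hε.ne', one_smul]
  · intro c hc
    have hcz' : c * z' = z' * c := by
      rw [hz', mul_smul_comm, smul_mul_assoc, hc]
    have hcb : c * b = b * c := by
      calc c * b = (b * z') * (c * b) := by rw [hbz', one_mul]
        _ = b * (z' * c) * b := by rw [mul_assoc, ← mul_assoc z' c b, ← mul_assoc]
        _ = b * (c * z') * b := by rw [hcz']
        _ = (b * c) * (z' * b) := by rw [mul_assoc, mul_assoc, mul_assoc]
        _ = b * c := by rw [hz'b, mul_one]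
    rw [mul_smul_comm, smul_mul_assoc, hcb]

lemma carr_pos' {e : R} (he : e ∈ S.Pos) :
    e * S.carr e = e ∧ S.carr e * e = e ∧ S.carr e ∈ S.Pos := by
  obtain ⟨hpc, hpp, hiff⟩ := S.carr_spec' (S.pos_subset he)
  set p := S.carr e with hp
  have h1 : e * (1 - p) = 0 := by
    refine (hiff (1-p) (S.sub_mem' S.one_mem hpc)).mpr ?_
    rw [mul_sub, mul_one, hpp, sub_self]
  have hep : e * p = e := by
    rw [mul_sub, mul_one, sub_eq_zero] at h1; exact h1.symm
  have h2 : (1 - p) * e = 0 := S.ann_left_of_right' he (S.sub_mem' S.one_mem hpc) h1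
  have hpe : p * e = e := by
    rw [sub_mul, one_mul, sub_eq_zero] at h2; exact h2.symm
  exact ⟨hep, hpe, S.pos_of_idem' hpc hpp⟩

lemma sq_ann' {e x : R} (he : e ∈ S.Pos) (hx : x ∈ S.carrier) (h : (e*e) * x = 0) :
    e * x = 0 := by
  have he2 : e * e ∈ S.Pos := S.SA2 he he rfl
  obtain ⟨hPc, hPP, hPiff⟩ := S.carr_spec' (S.pos_subset he2)
  set P := S.carr (e*e) with hP
  set u := (1:R) - P with hu
  have huc : u ∈ S.carrier := S.sub_mem' S.one_mem hPc
  have hupos : u ∈ S.Pos := S.pos_of_idem' huc (by rw [hu, mul_sub, sub_mul, sub_mul, mul_one, one_mul, mul_one, hPP]; abel)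
  have heeu : (e*e) * u = 0 := by
    refine (hPiff u huc).mpr ?_
    rw [hu, mul_sub, mul_one, hPP, sub_self]
  have hz : e * u * e ∈ S.Pos := S.SA4 he hupos
  have hzz : (e * u * e) * (e * u * e) = 0 := by
    have : (e * u * e) * (e * u * e) = e * u * ((e * e) * u) * e := by
      simp only [mul_assoc]
    rw [this, heeu, mul_zero, zero_mul]
  have hz0 : e * u * e = 0 := S.eq_zero_of_sq' (S.pos_subset hz) hzz
  have h5 := S.SA5 (S.pos_subset he) hupos hz0
  have heP : e * P = e := by
    have : e * u = 0 := h5.1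
    rw [hu, mul_sub, mul_one, sub_eq_zero] at this; exact this.symm
  have hPx : P * x = 0 := (hPiff x hx).mp h
  rw [← heP, mul_assoc, hPx, mul_zero]

end SynapticAlgebra
namespace SynapticAlgebra

variable {R : Type*} [Ring R] [Algebra ℝ R] (S : SynapticAlgebra R)

lemma carr_comm_pos' {e c : R} (he : e ∈ S.Pos) (hc : c ∈ S.Pos) (hce : c * e = e * c) :
    c * S.carr e = S.carr e * c := by
  obtain ⟨hpc, hpp, hiff⟩ := S.carr_spec' (S.pos_subset he)
  obtain ⟨hep, hpe, hppos⟩ := S.carr_pos' he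
  set p := S.carr e with hpdef
  set u := (1:R) - p with hu
  have huc : u ∈ S.carrier := S.sub_mem' S.one_mem hpc
  have huu : u * u = u := by
    rw [hu, mul_sub, sub_mul, sub_mul, mul_one, one_mul, mul_one, hpp]; abel
  have hupos : u ∈ S.Pos := S.pos_of_idem' huc huu
  have hpu : p * u = 0 := by rw [hu, mul_sub, mul_one, hpp, sub_self]
  have hup : u * p = 0 := by rw [hu, sub_mul, one_mul, hpp, sub_self]
  have hue : u * e = 0 := by rw [hu, sub_mul, one_mul, hpe, sub_self]
  have hcuc : c * u * c ∈ S.Pos := S.SA4 hc hupos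
  have hcpc : c * p * c ∈ S.Pos := S.SA4 hc hppos
  have hy : p * (c*u*c) * p ∈ S.Pos := S.SA4 hppos hcuc
  have heye : e * (p * (c*u*c) * p) * e = 0 := by
    simp only [mul_assoc]
    rw [hpe, hce, ← mul_assoc u e, hue]
    simp
  have hey : e * (p * (c*u*c) * p) = 0 := (S.SA5 (S.pos_subset he) hy heye).1
  have hpy : p * (p * (c*u*c) * p) = 0 := (hiff _ (S.pos_subset hy)).mp hey
  have hy0 : p * (c*u*c) * p = 0 := by
    have hh : p * (p * (c*u*c) * p) = p * (c*u*c) * p := by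
      rw [← mul_assoc, ← mul_assoc, hpp]
    rwa [hh] at hpy
  have hy0x : ∀ x:R, p*(c*(u*(c*(p*x)))) = 0 := fun x => by
    have := congrArg (fun z => z * x) hy0
    simpa [mul_assoc] using this
  have ht : u * (c*p*c) * u ∈ S.Pos := S.SA4 hupos hcpc
  have htt : (u*(c*p*c)*u) * (u*(c*p*c)*u) = 0 := by
    simp only [mul_assoc]
    rw [← mul_assoc u u, huu, hy0x]
    simp
  have ht0 : u*(c*p*c)*u = 0 := S.eq_zero_of_sq' (S.pos_subset ht) htt
  have hpcp : p*c*p ∈ S.Pos := S.SA4 hppos hc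
  have hucu : u*c*u ∈ S.Pos := S.SA4 hupos hc
  have hone : p + u = 1 := by rw [hu]; abel
  have hdecomp : c = p*c*p + (p*c*u + (u*c*p + u*c*u)) := by
    calc c = (p + u) * c * (p + u) := by rw [hone, one_mul, mul_one]
      _ = p*c*p + (p*c*u + (u*c*p + u*c*u)) := by
          simp only [add_mul, mul_add]; abel
  have hsplit : c = (p*c*u + u*c*p) + (p*c*p + u*c*u) := by
    conv_lhs => rw [hdecomp]
    abel
  have hj : p*c*u + u*c*p ∈ S.carrier := by
    have hh : p*c*u + u*c*p = c - p*c*p - u*c*u := by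
      rw [sub_sub, eq_sub_iff_add_eq]
      exact hsplit.symm
    rw [hh]
    exact S.sub_mem' (S.sub_mem' (S.pos_subset hc) (S.pos_subset hpcp)) (S.pos_subset hucu)
  have hupx : ∀ x:R, u*(p*x) = 0 := fun x => by rw [← mul_assoc, hup, zero_mul]
  have hpux : ∀ x:R, p*(u*x) = 0 := fun x => by rw [← mul_assoc, hpu, zero_mul]
  have hy0r : p*(c*(u*(c*p))) = 0 := by simpa [mul_assoc] using hy0
  have ht0r : u*(c*(p*(c*u))) = 0 := by simpa [mul_assoc] using ht0
  have hjj : (p*c*u + u*c*p) * (p*c*u + u*c*p) = 0 := by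
    simp only [add_mul, mul_add, mul_assoc]
    rw [← mul_assoc u u, huu, ← mul_assoc p p, hpp]
    rw [hupx, hpux, hy0r, ht0r]
    simp
  have hj0 : p*c*u + u*c*p = 0 := S.eq_zero_of_sq' hj hjj
  have hceq : c = p*c*p + u*c*u := by
    have hh := hsplit
    rw [hj0, zero_add] at hh
    exact hh
  have hcp : c * p = p * (c*p) := by
    nth_rewrite 1 [hceq]
    simp only [add_mul, mul_assoc]
    rw [hpp, hup]
    simp
  have hpc2 : p * c = p * (c*p) := by
    nth_rewrite 1 [hceq]
    simp only [mul_add, mul_assoc]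
    rw [hpux, ← mul_assoc p p, hpp]
    simp
  rw [hcp, hpc2]

lemma carr_comm' {e c : R} (he : e ∈ S.Pos) (hc : c ∈ S.carrier) (hce : c * e = e * c) :
    c * S.carr e = S.carr e * c := by
  obtain ⟨t, ht, hct⟩ := S.exists_shift' hc
  have hcomm : (c + t•(1:R)) * e = e * (c + t•(1:R)) := by
    rw [add_mul, mul_add, hce, smul_mul_assoc, mul_smul_comm, one_mul, mul_one]
  have hres := S.carr_comm_pos' he hct hcomm
  rw [add_mul, mul_add, smul_mul_assoc, mul_smul_comm, one_mul, mul_one] at hres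
  exact add_right_cancel hres

end SynapticAlgebra
namespace SynapticAlgebra

variable {R : Type*} [Ring R] [Algebra ℝ R] (S : SynapticAlgebra R)

lemma pos_lemma' {a w : R} {μ : ℝ} (ha : a ∈ S.carrier) (hw : w ∈ S.Pos) (hμ : 0 < μ)
    (hsq : w * w = a * a + μ • (1:R)) (hcm : a * w = w * a) : w - a ∈ S.Pos := by
  have hwc : w ∈ S.carrier := S.pos_subset hw
  set g := w - a with hgdef
  have hg : g ∈ S.carrier := S.sub_mem' hwc ha
  have hgwa : g * (w + a) = μ • (1:R) := by
    rw [hgdef, sub_mul, mul_add, mul_add, hsq, hcm]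
    abel
  have hwag : (w + a) * g = μ • (1:R) := by
    rw [hgdef, mul_sub, add_mul, add_mul, hsq, hcm]
    abel
  set gi := μ⁻¹ • (w + a) with hgidef
  have hgic : gi ∈ S.carrier := S.smul_mem _ (S.add_mem hwc ha)
  have hggi : g * gi = 1 := by
    rw [hgidef, mul_smul_comm, hgwa, smul_smul, inv_mul_cancel₀ hμ.ne', one_smul]
  have hgig : gi * g = 1 := by
    rw [hgidef, smul_mul_assoc, hwag, smul_smul, inv_mul_cancel₀ hμ.ne', one_smul]
  have hg2 : g * g ∈ S.Pos := S.SA3 hg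
  obtain ⟨hePos, heComm, heSq⟩ := S.sqrt_spec' hg2
  set e := S.sqrt (g * g) with hedef
  have hec : e ∈ S.carrier := S.pos_subset hePos
  have hge : g * e = e * g := heComm g hg (by rw [mul_assoc])
  have hgie : gi * e = e * gi := by
    refine heComm gi hgic ?_
    rw [← mul_assoc, hgig, one_mul, mul_assoc, hggi, mul_one]
  set ei := e * (gi * gi) with heidef
  have heei : e * ei = 1 := by
    rw [heidef, ← mul_assoc, heSq, mul_assoc, ← mul_assoc g gi, hggi, one_mul, hggi]
  have heie : ei * e = 1 := by
    rw [heidef, mul_assoc, mul_assoc gi gi e, hgie, ← mul_assoc gi e gi, hgie,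
      mul_assoc e gi gi, ← mul_assoc e e, heSq, mul_assoc g g, ← mul_assoc g gi gi,
      hggi, one_mul, hggi]
  have heicomm : e * ei = ei * e := by rw [heei, heie]
  have heiPos : ei ∈ S.Pos := by
    refine S.SA2 hePos (S.SA3 hgic) ?_
    rw [← mul_assoc e gi gi, ← hgie, mul_assoc gi e gi, ← hgie, ← mul_assoc gi gi e]
  have heic : ei ∈ S.carrier := S.pos_subset heiPos
  have hgei : g * ei = ei * g := by
    rw [heidef, ← mul_assoc g e, hge, mul_assoc e g, ← mul_assoc g gi gi, hggi, one_mul,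
      mul_assoc e (gi*gi) g, mul_assoc gi gi g, hgig, mul_one]
  set u := g * ei with hudef
  have huc : u ∈ S.carrier := S.comm_mul_mem' hg heic hgei
  have hu2 : u = e * gi := by
    rw [hudef, heidef, ← mul_assoc, hge, mul_assoc e g, ← mul_assoc g gi, hggi, one_mul]
  have huu : u * u = 1 := by
    rw [hu2, mul_assoc, ← mul_assoc gi e, hgie, mul_assoc e gi, ← mul_assoc e e, heSq,
      mul_assoc g g, ← mul_assoc g gi, hggi, one_mul, hggi]
  have hue2 : u * e = g := by rw [hudef, mul_assoc, heie, mul_one]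
  have huei : u * ei = gi := by
    rw [hu2, heidef, mul_assoc e gi, ← mul_assoc gi e, hgie, mul_assoc e gi,
      ← mul_assoc e e, heSq, mul_assoc g g, ← mul_assoc g gi, hggi, one_mul,
      ← mul_assoc g gi, hggi, one_mul]
  set Q := (2⁻¹:ℝ) • ((1:R) - u) with hQdef
  have hQc : Q ∈ S.carrier := S.smul_mem _ (S.sub_mem' S.one_mem huc)
  have hQQ : Q * Q = Q := by
    rw [hQdef, smul_mul_assoc, mul_smul_comm, smul_smul, mul_sub, sub_mul, sub_mul]
    simp only [one_mul, mul_one, huu]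
    module
  have hQPos : Q ∈ S.Pos := S.pos_of_idem' hQc hQQ
  set k := e + μ • ei with hkdef
  have huk : u * k = w + w := by
    rw [hkdef, mul_add, mul_smul_comm, hue2, huei, hgidef, smul_smul,
      mul_inv_cancel₀ hμ.ne', one_smul, hgdef]
    abel
  have hQu : Q * u = -Q := by
    rw [hQdef, smul_mul_assoc, sub_mul, one_mul, huu]
    module
  have hQwk : Q * ((w + w) + k) * Q = 0 := by
    have h1 : Q * ((w + w) + k) = Q * (u * k) + Q * k := by rw [← huk, mul_add]
    have h2 : Q * (u * k) = -(Q * k) := by rw [← mul_assoc Q u k, hQu, neg_mul]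
    rw [h1, h2, neg_add_cancel, zero_mul]
  obtain ⟨n, hn⟩ := S.orderUnit hec
  have hb : ((n:ℝ)+1) • (1:R) - e ∈ S.Pos := by
    have h1 := S.pos_add hn S.one_pos
    have h2 : ((n:ℝ)•(1:R) - e) + 1 = ((n:ℝ)+1)•(1:R) - e := by module
    rwa [h2] at h1
  have hν0 : (0:ℝ) < (n:ℝ)+1 := by positivity
  have heilb : ei - ((n:ℝ)+1)⁻¹ • (1:R) ∈ S.Pos := by
    have hprod := S.SA2 hb heiPos (by
      rw [sub_mul, mul_sub, smul_mul_assoc, mul_smul_comm, one_mul, mul_one, heicomm])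
    have heq : (((n:ℝ)+1)•(1:R) - e) * ei = ((n:ℝ)+1)•ei - 1 := by
      rw [sub_mul, smul_mul_assoc, one_mul, heei]
    rw [heq] at hprod
    have h3 := S.pos_smul (inv_nonneg.mpr hν0.le) hprod
    rwa [smul_sub, smul_smul, inv_mul_cancel₀ hν0.ne', one_smul] at h3
  set cc := μ * ((n:ℝ)+1)⁻¹ with hccdef
  have hcc0 : (0:ℝ) < cc := by positivity
  have hklb : ((w + w) + k) - cc • (1:R) ∈ S.Pos := by
    have h1 : μ•ei - cc•(1:R) ∈ S.Pos := by
      have := S.pos_smul hμ.le heilb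
      rwa [smul_sub, smul_smul] at this
    have h2 := S.pos_add (S.pos_add (S.pos_add hw hw) hePos) h1
    have heq : ((w+w) + e) + (μ•ei - cc•(1:R)) = ((w+w) + k) - cc•(1:R) := by
      rw [hkdef]; abel
    rwa [heq] at h2
  have hQkQ : Q * (((w+w)+k) - cc•(1:R)) * Q ∈ S.Pos := S.SA4 hQPos hklb
  have hQeq : Q * (((w+w)+k) - cc•(1:R)) * Q = -(cc • Q) := by
    have h1 : Q * (((w+w)+k) - cc•(1:R)) = Q * ((w+w)+k) - cc • Q := by
      rw [mul_sub, mul_smul_comm cc Q (1:R), mul_one]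
    have h2 : (Q * ((w+w)+k) - cc • Q) * Q = Q * ((w+w)+k) * Q - cc • (Q*Q) := by
      rw [sub_mul, smul_mul_assoc cc Q Q]
    rw [h1, h2, hQwk, hQQ, zero_sub]
  rw [hQeq] at hQkQ
  have hQ0 : Q = 0 := by
    have h0 : cc • Q = 0 := S.pos_antisymm (S.pos_smul hcc0.le hQPos) hQkQ
    have h1 := congrArg (fun x => cc⁻¹ • x) h0
    simpa [smul_smul, inv_mul_cancel₀ hcc0.ne'] using h1
  have hu1 : u = 1 := by
    have h1 : (1:R) - u = (2:ℝ) • Q := by rw [hQdef, smul_smul]; norm_num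
    rw [hQ0, smul_zero] at h1
    exact (sub_eq_zero.mp h1).symm
  have hge2 : g = e := by
    calc g = g * (ei * e) := by rw [heie, mul_one]
      _ = u * e := by rw [← mul_assoc, ← hudef]
      _ = e := by rw [hu1, one_mul]
  show w - a ∈ S.Pos
  have hfin : w - a = e := hge2
  rw [hfin]
  exact hePos

end SynapticAlgebra
namespace SynapticAlgebra

variable {R : Type*} [Ring R] [Algebra ℝ R] (S : SynapticAlgebra R)

lemma abs_spec' {a : R} (ha : a ∈ S.carrier) :
    S.abs a ∈ S.Pos ∧ (∀ c ∈ S.carrier, c * (a*a) = (a*a) * c → c * S.abs a = S.abs a * c) ∧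
      S.abs a * S.abs a = a * a := by
  have h := S.sqrt_spec' (S.SA3 ha)
  simp only [abs]
  exact h

lemma abs_pm_pos' {a : R} (ha : a ∈ S.carrier) :
    S.abs a - a ∈ S.Pos ∧ S.abs a + a ∈ S.Pos := by
  obtain ⟨hrPos, hrComm, hrSq⟩ := S.abs_spec' ha
  have hrc : S.abs a ∈ S.carrier := S.pos_subset hrPos
  set r := S.abs a with hrdef
  have hra : a * r = r * a := hrComm a ha (by rw [mul_assoc])
  have key : ∀ ε : ℝ, 0 < ε → (r - a) + ε•(1:R) ∈ S.Pos ∧ (r + a) + ε•(1:R) ∈ S.Pos := by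
    intro ε hε
    have hμ : (0:ℝ) < ε*ε := mul_pos hε hε
    have hxPos : a*a + (ε*ε)•(1:R) ∈ S.Pos := S.pos_add (S.SA3 ha) (S.smul_one_pos' hμ.le)
    obtain ⟨hwPos, hwComm, hwSq⟩ := S.sqrt_spec' hxPos
    have hwc : S.sqrt (a*a + (ε*ε)•(1:R)) ∈ S.carrier := S.pos_subset hwPos
    set w := S.sqrt (a*a + (ε*ε)•(1:R)) with hwdef
    have haw : a * w = w * a := by
      refine hwComm a ha ?_
      rw [mul_add, add_mul, mul_smul_comm (ε*ε) a (1:R), smul_mul_assoc (ε*ε) (1:R) a,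
        one_mul, mul_one, mul_assoc]
    have h1 : w - a ∈ S.Pos := S.pos_lemma' ha hwPos hμ hwSq haw
    have h2 : w + a ∈ S.Pos := by
      have hsq2 : w*w = (-a)*(-a) + (ε*ε)•(1:R) := by rw [neg_mul_neg]; exact hwSq
      have hcm2 : (-a)*w = w*(-a) := by rw [neg_mul, mul_neg, haw]
      have h3 := S.pos_lemma' (S.neg_mem ha) hwPos hμ hsq2 hcm2
      rwa [sub_neg_eq_add] at h3
    have hrw : r * w = w * r := by
      refine hwComm r hrc ?_
      have hra2 : r * (a*a) = (a*a) * r := by rw [← hrSq]; rw [mul_assoc]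
      rw [mul_add, add_mul, hra2, mul_smul_comm (ε*ε) r (1:R), smul_mul_assoc (ε*ε) (1:R) r,
        one_mul, mul_one]
    have hsumPos : (r + ε•(1:R) + w) - ε•(1:R) ∈ S.Pos := by
      have heq : (r + ε•(1:R) + w) - ε•(1:R) = r + w := by abel
      rw [heq]; exact S.pos_add hrPos hwPos
    obtain ⟨i, hiPos, hyi, hiy, hicomm⟩ := S.inv_lemma' hε hsumPos
    have hri : r * i = i * r := by
      refine hicomm r ?_
      rw [mul_add, add_mul, mul_add, add_mul, hrw, mul_smul_comm ε r (1:R),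
        smul_mul_assoc ε (1:R) r, mul_one, one_mul]
    have hyw : (r + ε•(1:R)) * w = w * (r + ε•(1:R)) := by
      rw [add_mul, mul_add, hrw, smul_mul_assoc ε (1:R) w, mul_smul_comm ε w (1:R),
        one_mul, mul_one]
    have h5 : ((r + ε•(1:R)) - w) * ((r + ε•(1:R)) + w) = (2*ε)•r := by
      simp only [sub_mul, mul_add, add_mul, smul_mul_assoc, mul_smul_comm, one_mul,
        mul_one, smul_smul, hrw, hrSq, hwSq]
      module
    have hkey : (r + ε•(1:R)) - w = ((2*ε)•r) * i := by
      calc (r + ε•(1:R)) - w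
          = (((r + ε•(1:R)) - w) * ((r + ε•(1:R)) + w)) * i := by
            rw [mul_assoc, hyi, mul_one]
        _ = ((2*ε)•r) * i := by rw [h5]
    have hcomm2 : ((2*ε)•r) * i = i * ((2*ε)•r) := by
      rw [smul_mul_assoc, mul_smul_comm, hri]
    have hPos3 : (r + ε•(1:R)) - w ∈ S.Pos := by
      rw [hkey]
      exact S.SA2 (S.pos_smul (by positivity) hrPos) hiPos hcomm2
    constructor
    · have heq : (r - a) + ε•(1:R) = ((r + ε•(1:R)) - w) + (w - a) := by abel
      rw [heq]; exact S.pos_add hPos3 h1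
    · have heq : (r + a) + ε•(1:R) = ((r + ε•(1:R)) - w) + (w + a) := by abel
      rw [heq]; exact S.pos_add hPos3 h2
  exact ⟨S.arch_aux' (S.sub_mem' hrc ha) (fun ε hε => (key ε hε).1),
    S.arch_aux' (S.add_mem hrc ha) (fun ε hε => (key ε hε).2)⟩

end SynapticAlgebra
open SynapticAlgebra Filter

variable {R : Type*} [Ring R] [Algebra ℝ R]

/-- Theorem 3.6 (polar decomposition): (i) `sgn(a) ∈ CC(a)`; (ii) `sgn(a)² = a°`;
(iii) `sgn(a)·a = a·sgn(a) = |a|`; (iv) `sgn(a)·|a| = |a|·sgn(a) = a`. -/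
theorem stmt9 (S : SynapticAlgebra R) {a : R} (ha : a ∈ S.carrier) :
    S.inCC a (S.sgn a) ∧
    (S.sgn a * S.sgn a = S.carr a) ∧
    (S.sgn a * a = S.abs a ∧ a * S.sgn a = S.abs a) ∧
    (S.sgn a * S.abs a = a ∧ S.abs a * S.sgn a = a) := by
  obtain ⟨hrPos, hrComm, hrSq⟩ := S.abs_spec' ha
  obtain ⟨hsub, hadd⟩ := S.abs_pm_pos' ha
  have hrc : S.abs a ∈ S.carrier := S.pos_subset hrPos
  have hra : a * S.abs a = S.abs a * a := hrComm a ha (by rw [mul_assoc])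
  simp only [inCC, sgn, SynapticAlgebra.posPart, SynapticAlgebra.negPart]
  set r := S.abs a with hrdef
  set ap := (1/2:ℝ) • (r + a) with hapdef
  set an := (1/2:ℝ) • (r - a) with handef
  set p := S.carr ap with hpdef
  set q := S.carr an with hqdef
  have hapPos : ap ∈ S.Pos := S.pos_smul (by norm_num) hadd
  have hanPos : an ∈ S.Pos := S.pos_smul (by norm_num) hsub
  have hapc : ap ∈ S.carrier := S.pos_subset hapPos
  have hanc : an ∈ S.carrier := S.pos_subset hanPos
  have hsum : ap + an = r := by rw [hapdef, handef]; module
  have hdiff : ap - an = a := by rw [hapdef, handef]; module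
  have hprod : (r + a) * (r - a) = 0 := by
    rw [mul_sub, add_mul, add_mul, hrSq, hra]; abel
  have hprod2 : (r - a) * (r + a) = 0 := by
    rw [sub_mul, mul_add, mul_add, hrSq, hra]; abel
  have horth : ap * an = 0 := by
    rw [hapdef, handef, smul_mul_assoc, mul_smul_comm, hprod, smul_zero, smul_zero]
  have horth2 : an * ap = 0 := by
    rw [hapdef, handef, smul_mul_assoc, mul_smul_comm, hprod2, smul_zero, smul_zero]
  obtain ⟨hpc, hpp, hpiff⟩ := S.carr_spec' hapc
  obtain ⟨hqc, hqq, hqiff⟩ := S.carr_spec' hanc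
  obtain ⟨happ, hpap, hpPos⟩ := S.carr_pos' hapPos
  obtain ⟨hanq, hqan, hqPos⟩ := S.carr_pos' hanPos
  have hpan : p * an = 0 := (hpiff an hanc).mp horth
  have hanp : an * p = 0 := S.ann_right_of_left' hanPos hpc hpan
  have hqap : q * ap = 0 := (hqiff ap hapc).mp horth2
  have hapq : ap * q = 0 := S.ann_right_of_left' hapPos hqc hqap
  have hpq : p * q = 0 := (hpiff q hqc).mp hapq
  have hqp : q * p = 0 := (hqiff p hpc).mp hanp
  have hsgsq : (p - q) * (p - q) = p + q := by
    rw [mul_sub, sub_mul, sub_mul, hpp, hqq, hpq, hqp, sub_zero, zero_sub, sub_neg_eq_add]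
  obtain ⟨hPc, hPP, hPiff⟩ := S.carr_spec' ha
  have hpqc : p + q ∈ S.carrier := S.add_mem hpc hqc
  have hpqidem : (p + q) * (p + q) = p + q := by
    rw [mul_add, add_mul, add_mul, hpp, hqq, hpq, hqp]; abel
  have hfor : ∀ x, x ∈ S.carrier → a * x = 0 → (p + q) * x = 0 := by
    intro x hx h0
    have haa : (a * a) * x = 0 := by rw [mul_assoc, h0, mul_zero]
    have hrx : r * x = 0 := S.sq_ann' hrPos hx (by rw [hrSq]; exact haa)
    have hax : ap * x = 0 := by
      rw [hapdef, smul_mul_assoc, add_mul, hrx, h0, add_zero, smul_zero]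
    have hanx : an * x = 0 := by
      rw [handef, smul_mul_assoc, sub_mul, hrx, h0, sub_zero, smul_zero]
    rw [add_mul, (hpiff x hx).mp hax, (hqiff x hx).mp hanx, add_zero]
  have hback : ∀ x, x ∈ S.carrier → (p + q) * x = 0 → a * x = 0 := by
    intro x hx h0
    have hpx : p * x = 0 := by
      have he : p * ((p + q) * x) = p * x := by
        rw [← mul_assoc, mul_add, hpp, hpq, add_zero]
      rw [h0, mul_zero] at he; exact he.symm
    have hqx : q * x = 0 := by
      have he : q * ((p + q) * x) = q * x := by
        rw [← mul_assoc, mul_add, hqq, hqp, zero_add]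
      rw [h0, mul_zero] at he; exact he.symm
    have hax : ap * x = 0 := (hpiff x hx).mpr hpx
    have hanx : an * x = 0 := (hqiff x hx).mpr hqx
    have hd : (ap - an) * x = 0 := by rw [sub_mul, hax, hanx, sub_zero]
    rwa [hdiff] at hd
  have hP1 : S.carr a * (p + q) = S.carr a := by
    have h1 : S.carr a * (1 - (p + q)) = 0 := by
      refine (hPiff _ (S.sub_mem' S.one_mem hpqc)).mp ?_
      refine hback _ (S.sub_mem' S.one_mem hpqc) ?_
      rw [mul_sub, mul_one, hpqidem, sub_self]
    rw [mul_sub, mul_one, sub_eq_zero] at h1; exact h1.symm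
  have hP2 : (p + q) * S.carr a = p + q := by
    have h2 : (p + q) * (1 - S.carr a) = 0 := by
      refine hfor _ (S.sub_mem' S.one_mem hPc) ?_
      exact (hPiff _ (S.sub_mem' S.one_mem hPc)).mpr
        (by rw [mul_sub, mul_one, hPP, sub_self])
    rw [mul_sub, mul_one, sub_eq_zero] at h2; exact h2.symm
  have hcarr : S.carr a = p + q := by
    have hDD : (S.carr a - (p + q)) * (S.carr a - (p + q)) = 0 := by
      rw [mul_sub, sub_mul, sub_mul, hPP, hpqidem, hP1, hP2]; abel
    have hD0 := S.eq_zero_of_sq' (S.sub_mem' hPc hpqc) hDD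
    rwa [sub_eq_zero] at hD0
  have e3 : (p - q) * (ap - an) = ap + an := by
    rw [mul_sub, sub_mul, sub_mul, hpap, hqap, hpan, hqan, sub_zero, zero_sub, sub_neg_eq_add]
  have e4 : (ap - an) * (p - q) = ap + an := by
    rw [sub_mul, mul_sub, mul_sub, happ, hapq, hanp, hanq, sub_zero, zero_sub, sub_neg_eq_add]
  have e5 : (p - q) * (ap + an) = ap - an := by
    rw [mul_add, sub_mul, sub_mul, hpap, hqap, hpan, hqan, sub_zero, zero_sub, ← sub_eq_add_neg]
  have e6 : (ap + an) * (p - q) = ap - an := by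
    rw [add_mul, mul_sub, mul_sub, happ, hapq, hanp, hanq, sub_zero, zero_sub, ← sub_eq_add_neg]
  refine ⟨⟨S.sub_mem' hpc hqc, ?_⟩, ?_, ⟨?_, ?_⟩, ?_, ?_⟩
  · intro c hc hca
    have hca2 : c * (a * a) = (a * a) * c := by
      rw [← mul_assoc c a a, hca, mul_assoc a c a, hca, ← mul_assoc a a c]
    have hcr : c * r = r * c := hrComm c hc hca2
    have hcap : c * ap = ap * c := by
      rw [hapdef, mul_smul_comm, smul_mul_assoc, mul_add, add_mul, hcr, hca]
    have hcan : c * an = an * c := by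
      rw [handef, mul_smul_comm, smul_mul_assoc, mul_sub, sub_mul, hcr, hca]
    have hcp : c * p = p * c := S.carr_comm' hapPos hc hcap
    have hcq : c * q = q * c := S.carr_comm' hanPos hc hcan
    rw [mul_sub, sub_mul, hcp, hcq]
  · rw [hsgsq, hcarr]
  · calc (p - q) * a = (p - q) * (ap - an) := by rw [hdiff]
      _ = ap + an := e3
      _ = r := hsum
  · calc a * (p - q) = (ap - an) * (p - q) := by rw [hdiff]
      _ = ap + an := e4
      _ = r := hsum
  · calc (p - q) * r = (p - q) * (ap + an) := by rw [hsum]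
      _ = ap - an := e5
      _ = a := hdiff
  · calc r * (p - q) = (ap + an) * (p - q) := by rw [hsum]
      _ = ap - an := e6
      _ = a := hdiff
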